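/- Translating an rLTL formula φ to its four LTL bit formulae incurs only linear growth in closure size: the cardinality of the union of the closures of ltl(1,φ), ltl(2,φ), ltl(3,φ), ltl(4,φ) is at most 12·|φ|, where |φ| is the number of distinct subformulae of φ. -/
import Mathlib


namespace RLTLPaper

/-- Suffix of an infinite word: `shift σ i` is the word `σ(i) σ(i+1) ...`. -/
def shift {P : Type*} (σ : ℕ → Set P) (i : ℕ) : ℕ → Set P := fun j => σ (i + j)

/-- Syntax of LTL formulae over atomic propositions `P`. -/
inductive LTL (P : Type*) where
  | tt : LTL P
  | ff : LTL P
  | atom : P → LTL P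
  | not : LTL P → LTL P
  | and : LTL P → LTL P → LTL P
  | or : LTL P → LTL P → LTL P
  | imp : LTL P → LTL P → LTL P
  | next : LTL P → LTL P
  | ev : LTL P → LTL P
  | always : LTL P → LTL P
  | until_ : LTL P → LTL P → LTL P
  | release : LTL P → LTL P → LTL P
  deriving DecidableEq

/-- LTL semantics: `W φ σ` holds iff the infinite word `σ` satisfies `φ`. -/
def W {P : Type*} : LTL P → (ℕ → Set P) → Prop
  | .tt, _ => True
  | .ff, _ => False
  | .atom p, σ => p ∈ σ 0
  | .not φ, σ => ¬ W φ σ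
  | .and φ ψ, σ => W φ σ ∧ W ψ σ
  | .or φ ψ, σ => W φ σ ∨ W ψ σ
  | .imp φ ψ, σ => W φ σ → W ψ σ
  | .next φ, σ => W φ (shift σ 1)
  | .ev φ, σ => ∃ i, W φ (shift σ i)
  | .always φ, σ => ∀ i, W φ (shift σ i)
  | .until_ φ ψ, σ => ∃ j, W ψ (shift σ j) ∧ ∀ i, i < j → W φ (shift σ i)
  | .release φ ψ, σ => ∀ j, W ψ (shift σ j) ∨ ∃ i, i < j ∧ W φ (shift σ i)

/-- Syntax of rLTL formulae over atomic propositions `P` (robust operators). -/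
inductive RLTL (P : Type*) where
  | tt : RLTL P
  | ff : RLTL P
  | atom : P → RLTL P
  | not : RLTL P → RLTL P
  | and : RLTL P → RLTL P → RLTL P
  | or : RLTL P → RLTL P → RLTL P
  | imp : RLTL P → RLTL P → RLTL P      -- robust implication ⟹
  | next : RLTL P → RLTL P              -- ⊙
  | ev : RLTL P → RLTL P                -- ◇·
  | always : RLTL P → RLTL P            -- ⊡
  | until_ : RLTL P → RLTL P → RLTL P   -- U·
  | release : RLTL P → RLTL P → RLTL P  -- R·
  deriving DecidableEq

/-- The translation `ltl` of Table 1: `ltl φ k` is the LTL formula for bit `k+1`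
(indices `0,1,2,3` correspond to the paper's bits `1,2,3,4`). -/
def ltl {P : Type*} : RLTL P → ℕ → LTL P
  | .tt, _ => .tt
  | .ff, _ => .ff
  | .atom p, _ => .atom p
  | .not φ, _ => .not (ltl φ 0)
  | .and φ ψ, k => .and (ltl φ k) (ltl ψ k)
  | .or φ ψ, k => .or (ltl φ k) (ltl ψ k)
  | .imp φ ψ, 0 =>
      .and (.imp (ltl φ 0) (ltl ψ 0)) (.and (.imp (ltl φ 1) (ltl ψ 1))
        (.and (.imp (ltl φ 2) (ltl ψ 2)) (.imp (ltl φ 3) (ltl ψ 3))))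
  | .imp φ ψ, 1 =>
      .and (.imp (ltl φ 1) (ltl ψ 1)) (.and (.imp (ltl φ 2) (ltl ψ 2)) (.imp (ltl φ 3) (ltl ψ 3)))
  | .imp φ ψ, 2 => .and (.imp (ltl φ 2) (ltl ψ 2)) (.imp (ltl φ 3) (ltl ψ 3))
  | .imp φ ψ, (j+3) => .imp (ltl φ (j+3)) (ltl ψ (j+3))
  | .next φ, k => .next (ltl φ k)
  | .ev φ, k => .ev (ltl φ k)
  | .always φ, 0 => .always (ltl φ 0)
  | .always φ, 1 => .ev (.always (ltl φ 1))
  | .always φ, 2 => .always (.ev (ltl φ 2))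
  | .always φ, (j+3) => .ev (ltl φ (j+3))
  | .until_ φ ψ, k => .until_ (ltl φ k) (ltl ψ k)
  | .release φ ψ, 0 => .release (ltl φ 0) (ltl ψ 0)
  | .release φ ψ, 1 => .or (.ev (ltl φ 1)) (.ev (.always (ltl ψ 1)))
  | .release φ ψ, 2 => .or (.ev (ltl φ 2)) (.always (.ev (ltl ψ 2)))
  | .release φ ψ, (j+3) => .or (.ev (ltl φ (j+3))) (.ev (ltl ψ (j+3)))

/-- The rLTL semantics, bit-wise: `V φ σ k` is the truth value of bit `k+1`
(indices `0,…,3` correspond to the paper's bits `1,…,4`) of `V(σ,φ) ∈ B5`. -/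
def V {P : Type*} : RLTL P → (ℕ → Set P) → ℕ → Prop
  | .tt, _, _ => True
  | .ff, _, _ => False
  | .atom p, σ, _ => p ∈ σ 0
  | .not φ, σ, _ => ¬ V φ σ 0
  | .and φ ψ, σ, k => V φ σ k ∧ V ψ σ k
  | .or φ ψ, σ, k => V φ σ k ∨ V ψ σ k
  | .imp φ ψ, σ, k => ∀ j, k ≤ j → j ≤ 3 → (V φ σ j → V ψ σ j)
  | .next φ, σ, k => V φ (shift σ 1) k
  | .ev φ, σ, k => ∃ i, V φ (shift σ i) k
  | .always φ, σ, 0 => ∀ i, V φ (shift σ i) 0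
  | .always φ, σ, 1 => ∃ j, ∀ i, j ≤ i → V φ (shift σ i) 1
  | .always φ, σ, 2 => ∀ j, ∃ i, j ≤ i ∧ V φ (shift σ i) 2
  | .always φ, σ, (j+3) => ∃ i, V φ (shift σ i) (j+3)
  | .until_ φ ψ, σ, k => ∃ j, V ψ (shift σ j) k ∧ ∀ i, i < j → V φ (shift σ i) k
  | .release φ ψ, σ, 0 => ∀ j, V ψ (shift σ j) 0 ∨ ∃ i, i < j ∧ V φ (shift σ i) 0
  | .release φ ψ, σ, 1 =>
      ∃ m, ∀ j, m ≤ j → (V ψ (shift σ j) 1 ∨ ∃ i, i < j ∧ V φ (shift σ i) 1)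
  | .release φ ψ, σ, 2 =>
      ∀ m, ∃ j, m ≤ j ∧ (V ψ (shift σ j) 2 ∨ ∃ i, i < j ∧ V φ (shift σ i) 2)
  | .release φ ψ, σ, (j+3) =>
      ∃ m, V ψ (shift σ m) (j+3) ∨ ∃ i, i < m ∧ V φ (shift σ i) (j+3)

set_option linter.unusedSectionVars false

variable {P : Type*} [DecidableEq P]

/-- Closure of an LTL formula: the finite set of its distinct subformulae. -/
def cl : LTL P → Finset (LTL P)
  | .tt => {.tt}
  | .ff => {.ff}
  | .atom p => {.atom p}
  | .not φ => insert (.not φ) (cl φ)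
  | .and φ ψ => insert (.and φ ψ) (cl φ ∪ cl ψ)
  | .or φ ψ => insert (.or φ ψ) (cl φ ∪ cl ψ)
  | .imp φ ψ => insert (.imp φ ψ) (cl φ ∪ cl ψ)
  | .next φ => insert (.next φ) (cl φ)
  | .ev φ => insert (.ev φ) (cl φ)
  | .always φ => insert (.always φ) (cl φ)
  | .until_ φ ψ => insert (.until_ φ ψ) (cl φ ∪ cl ψ)
  | .release φ ψ => insert (.release φ ψ) (cl φ ∪ cl ψ)

/-- Closure of an rLTL formula: the finite set of its distinct subformulae;
its cardinality is the length `|φ|`. -/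
def rcl : RLTL P → Finset (RLTL P)
  | .tt => {.tt}
  | .ff => {.ff}
  | .atom p => {.atom p}
  | .not φ => insert (.not φ) (rcl φ)
  | .and φ ψ => insert (.and φ ψ) (rcl φ ∪ rcl ψ)
  | .or φ ψ => insert (.or φ ψ) (rcl φ ∪ rcl ψ)
  | .imp φ ψ => insert (.imp φ ψ) (rcl φ ∪ rcl ψ)
  | .next φ => insert (.next φ) (rcl φ)
  | .ev φ => insert (.ev φ) (rcl φ)
  | .always φ => insert (.always φ) (rcl φ)
  | .until_ φ ψ => insert (.until_ φ ψ) (rcl φ ∪ rcl ψ)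
  | .release φ ψ => insert (.release φ ψ) (rcl φ ∪ rcl ψ)

def gen : RLTL P → Finset (LTL P)
  | .tt => {.tt}
  | .ff => {.ff}
  | .atom p => {.atom p}
  | .not φ => {.not (ltl φ 0)}
  | .and φ ψ => {.and (ltl φ 0) (ltl ψ 0), .and (ltl φ 1) (ltl ψ 1),
      .and (ltl φ 2) (ltl ψ 2), .and (ltl φ 3) (ltl ψ 3)}
  | .or φ ψ => {.or (ltl φ 0) (ltl ψ 0), .or (ltl φ 1) (ltl ψ 1),
      .or (ltl φ 2) (ltl ψ 2), .or (ltl φ 3) (ltl ψ 3)}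
  | .imp φ ψ =>
      { .imp (ltl φ 0) (ltl ψ 0), .imp (ltl φ 1) (ltl ψ 1),
        .imp (ltl φ 2) (ltl ψ 2), .imp (ltl φ 3) (ltl ψ 3),
        .and (.imp (ltl φ 2) (ltl ψ 2)) (.imp (ltl φ 3) (ltl ψ 3)),
        .and (.imp (ltl φ 1) (ltl ψ 1))
          (.and (.imp (ltl φ 2) (ltl ψ 2)) (.imp (ltl φ 3) (ltl ψ 3))),
        .and (.imp (ltl φ 0) (ltl ψ 0)) (.and (.imp (ltl φ 1) (ltl ψ 1))
          (.and (.imp (ltl φ 2) (ltl ψ 2)) (.imp (ltl φ 3) (ltl ψ 3)))) }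
  | .next φ => {.next (ltl φ 0), .next (ltl φ 1), .next (ltl φ 2), .next (ltl φ 3)}
  | .ev φ => {.ev (ltl φ 0), .ev (ltl φ 1), .ev (ltl φ 2), .ev (ltl φ 3)}
  | .always φ => {.always (ltl φ 0), .always (ltl φ 1), .ev (.always (ltl φ 1)),
      .ev (ltl φ 2), .always (.ev (ltl φ 2)), .ev (ltl φ 3)}
  | .until_ φ ψ => {.until_ (ltl φ 0) (ltl ψ 0), .until_ (ltl φ 1) (ltl ψ 1),
      .until_ (ltl φ 2) (ltl ψ 2), .until_ (ltl φ 3) (ltl ψ 3)}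
  | .release φ ψ =>
      { .release (ltl φ 0) (ltl ψ 0),
        .ev (ltl φ 1), .always (ltl ψ 1), .ev (.always (ltl ψ 1)),
        .or (.ev (ltl φ 1)) (.ev (.always (ltl ψ 1))),
        .ev (ltl φ 2), .ev (ltl ψ 2), .always (.ev (ltl ψ 2)),
        .or (.ev (ltl φ 2)) (.always (.ev (ltl ψ 2))),
        .ev (ltl φ 3), .ev (ltl ψ 3),
        .or (.ev (ltl φ 3)) (.ev (ltl ψ 3)) }

lemma card_insert_le' {α : Type*} [DecidableEq α] (a : α) (s : Finset α) {n : ℕ}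
    (h : s.card ≤ n) : (insert a s).card ≤ n + 1 :=
  (Finset.card_insert_le _ _).trans (Nat.succ_le_succ h)

lemma gen_card (φ : RLTL P) : (gen φ).card ≤ 12 := by
  cases φ <;> simp only [gen] <;>
  · apply le_trans
    · repeat
        first
        | (apply le_trans (Finset.card_insert_le _ _); apply Nat.add_le_add_right)
        | exact (Finset.card_singleton _).le
    · norm_num

lemma rcl_self (φ : RLTL P) : φ ∈ rcl φ := by cases φ <;> simp [rcl]

lemma mem_bi {χ : RLTL P} {x : LTL P} (h : x ∈ gen χ) : x ∈ (rcl χ).biUnion gen :=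
  Finset.mem_biUnion.2 ⟨χ, rcl_self χ, h⟩

lemma bi_mono {φ χ : RLTL P} (h : rcl φ ⊆ rcl χ) :
    (rcl φ).biUnion gen ⊆ (rcl χ).biUnion gen :=
  Finset.biUnion_subset_biUnion_of_subset_left _ h

lemma ltl_imp0 (φ ψ : RLTL P) : ltl (.imp φ ψ) 0 =
    .and (.imp (ltl φ 0) (ltl ψ 0)) (.and (.imp (ltl φ 1) (ltl ψ 1))
      (.and (.imp (ltl φ 2) (ltl ψ 2)) (.imp (ltl φ 3) (ltl ψ 3)))) := rfl
lemma ltl_imp1 (φ ψ : RLTL P) : ltl (.imp φ ψ) 1 =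
    .and (.imp (ltl φ 1) (ltl ψ 1))
      (.and (.imp (ltl φ 2) (ltl ψ 2)) (.imp (ltl φ 3) (ltl ψ 3))) := rfl
lemma ltl_imp2 (φ ψ : RLTL P) : ltl (.imp φ ψ) 2 =
    .and (.imp (ltl φ 2) (ltl ψ 2)) (.imp (ltl φ 3) (ltl ψ 3)) := rfl
lemma ltl_imp3 (φ ψ : RLTL P) : ltl (.imp φ ψ) 3 = .imp (ltl φ 3) (ltl ψ 3) := rfl
lemma ltl_alw0 (φ : RLTL P) : ltl (.always φ) 0 = .always (ltl φ 0) := rfl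
lemma ltl_alw1 (φ : RLTL P) : ltl (.always φ) 1 = .ev (.always (ltl φ 1)) := rfl
lemma ltl_alw2 (φ : RLTL P) : ltl (.always φ) 2 = .always (.ev (ltl φ 2)) := rfl
lemma ltl_alw3 (φ : RLTL P) : ltl (.always φ) 3 = .ev (ltl φ 3) := rfl
lemma ltl_rel0 (φ ψ : RLTL P) : ltl (.release φ ψ) 0 = .release (ltl φ 0) (ltl ψ 0) := rfl
lemma ltl_rel1 (φ ψ : RLTL P) : ltl (.release φ ψ) 1 =
    .or (.ev (ltl φ 1)) (.ev (.always (ltl ψ 1))) := rfl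
lemma ltl_rel2 (φ ψ : RLTL P) : ltl (.release φ ψ) 2 =
    .or (.ev (ltl φ 2)) (.always (.ev (ltl ψ 2))) := rfl
lemma ltl_rel3 (φ ψ : RLTL P) : ltl (.release φ ψ) 3 =
    .or (.ev (ltl φ 3)) (.ev (ltl ψ 3)) := rfl

set_option maxHeartbeats 2000000 in
lemma cl_ltl_subset (φ : RLTL P) : ∀ k ≤ 3, cl (ltl φ k) ⊆ (rcl φ).biUnion gen := by
  induction φ with
  | tt =>
      intro k hk; simp only [ltl, cl]
      exact Finset.singleton_subset_iff.2 (mem_bi (by simp [gen]))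
  | ff =>
      intro k hk; simp only [ltl, cl]
      exact Finset.singleton_subset_iff.2 (mem_bi (by simp [gen]))
  | atom p =>
      intro k hk; simp only [ltl, cl]
      exact Finset.singleton_subset_iff.2 (mem_bi (by simp [gen]))
  | not φ ihφ =>
      intro k hk
      have hφ : rcl φ ⊆ rcl (RLTL.not φ) := by
        intro x hx; simp only [rcl, Finset.mem_insert]; tauto
      simp only [ltl, cl, Finset.insert_subset_iff]
      exact ⟨mem_bi (by simp [gen]), (ihφ 0 (by norm_num)).trans (bi_mono hφ)⟩
  | and φ ψ ihφ ihψ =>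
      intro k hk
      have hφ : rcl φ ⊆ rcl (RLTL.and φ ψ) := by
        intro x hx; simp only [rcl, Finset.mem_insert, Finset.mem_union]; tauto
      have hψ : rcl ψ ⊆ rcl (RLTL.and φ ψ) := by
        intro x hx; simp only [rcl, Finset.mem_insert, Finset.mem_union]; tauto
      interval_cases k <;>
        simp only [ltl, cl, Finset.insert_subset_iff, Finset.union_subset_iff] <;>
        (repeat' apply And.intro) <;>
        first
        | exact mem_bi (by simp [gen])
        | exact (ihφ _ (by norm_num)).trans (bi_mono hφ)
        | exact (ihψ _ (by norm_num)).trans (bi_mono hψ)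
  | or φ ψ ihφ ihψ =>
      intro k hk
      have hφ : rcl φ ⊆ rcl (RLTL.or φ ψ) := by
        intro x hx; simp only [rcl, Finset.mem_insert, Finset.mem_union]; tauto
      have hψ : rcl ψ ⊆ rcl (RLTL.or φ ψ) := by
        intro x hx; simp only [rcl, Finset.mem_insert, Finset.mem_union]; tauto
      interval_cases k <;>
        simp only [ltl, cl, Finset.insert_subset_iff, Finset.union_subset_iff] <;>
        (repeat' apply And.intro) <;>
        first
        | exact mem_bi (by simp [gen])
        | exact (ihφ _ (by norm_num)).trans (bi_mono hφ)
        | exact (ihψ _ (by norm_num)).trans (bi_mono hψ)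
  | imp φ ψ ihφ ihψ =>
      intro k hk
      have hφ : rcl φ ⊆ rcl (RLTL.imp φ ψ) := by
        intro x hx; simp only [rcl, Finset.mem_insert, Finset.mem_union]; tauto
      have hψ : rcl ψ ⊆ rcl (RLTL.imp φ ψ) := by
        intro x hx; simp only [rcl, Finset.mem_insert, Finset.mem_union]; tauto
      interval_cases k <;>
        simp only [ltl_imp0, ltl_imp1, ltl_imp2, ltl_imp3, cl,
          Finset.insert_subset_iff, Finset.union_subset_iff] <;>
        (repeat' apply And.intro) <;>
        first
        | exact mem_bi (by simp [gen])
        | exact (ihφ _ (by norm_num)).trans (bi_mono hφ)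
        | exact (ihψ _ (by norm_num)).trans (bi_mono hψ)
  | next φ ihφ =>
      intro k hk
      have hφ : rcl φ ⊆ rcl (RLTL.next φ) := by
        intro x hx; simp only [rcl, Finset.mem_insert]; tauto
      interval_cases k <;>
        simp only [ltl, cl, Finset.insert_subset_iff, Finset.union_subset_iff] <;>
        (repeat' apply And.intro) <;>
        first
        | exact mem_bi (by simp [gen])
        | exact (ihφ _ (by norm_num)).trans (bi_mono hφ)
  | ev φ ihφ =>
      intro k hk
      have hφ : rcl φ ⊆ rcl (RLTL.ev φ) := by
        intro x hx; simp only [rcl, Finset.mem_insert]; tauto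
      interval_cases k <;>
        simp only [ltl, cl, Finset.insert_subset_iff, Finset.union_subset_iff] <;>
        (repeat' apply And.intro) <;>
        first
        | exact mem_bi (by simp [gen])
        | exact (ihφ _ (by norm_num)).trans (bi_mono hφ)
  | always φ ihφ =>
      intro k hk
      have hφ : rcl φ ⊆ rcl (RLTL.always φ) := by
        intro x hx; simp only [rcl, Finset.mem_insert]; tauto
      interval_cases k <;>
        simp only [ltl_alw0, ltl_alw1, ltl_alw2, ltl_alw3, cl,
          Finset.insert_subset_iff, Finset.union_subset_iff] <;>
        (repeat' apply And.intro) <;>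
        first
        | exact mem_bi (by simp [gen])
        | exact (ihφ _ (by norm_num)).trans (bi_mono hφ)
  | until_ φ ψ ihφ ihψ =>
      intro k hk
      have hφ : rcl φ ⊆ rcl (RLTL.until_ φ ψ) := by
        intro x hx; simp only [rcl, Finset.mem_insert, Finset.mem_union]; tauto
      have hψ : rcl ψ ⊆ rcl (RLTL.until_ φ ψ) := by
        intro x hx; simp only [rcl, Finset.mem_insert, Finset.mem_union]; tauto
      interval_cases k <;>
        simp only [ltl, cl, Finset.insert_subset_iff, Finset.union_subset_iff] <;>
        (repeat' apply And.intro) <;>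
        first
        | exact mem_bi (by simp [gen])
        | exact (ihφ _ (by norm_num)).trans (bi_mono hφ)
        | exact (ihψ _ (by norm_num)).trans (bi_mono hψ)
  | release φ ψ ihφ ihψ =>
      intro k hk
      have hφ : rcl φ ⊆ rcl (RLTL.release φ ψ) := by
        intro x hx; simp only [rcl, Finset.mem_insert, Finset.mem_union]; tauto
      have hψ : rcl ψ ⊆ rcl (RLTL.release φ ψ) := by
        intro x hx; simp only [rcl, Finset.mem_insert, Finset.mem_union]; tauto
      interval_cases k <;>
        simp only [ltl_rel0, ltl_rel1, ltl_rel2, ltl_rel3, cl,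
          Finset.insert_subset_iff, Finset.union_subset_iff] <;>
        (repeat' apply And.intro) <;>
        first
        | exact mem_bi (by simp [gen])
        | exact (ihφ _ (by norm_num)).trans (bi_mono hφ)
        | exact (ihψ _ (by norm_num)).trans (bi_mono hψ)

/-- translating an rLTL formula to its four LTL bit formulae
incurs only linear growth in closure size: the cardinality of the union of the
closures of `ltl(1,φ), …, ltl(4,φ)` is at most `12·|φ|`, where `|φ|` is the
number of distinct subformulae of `φ`. -/
theorem ltl_translation_linear (φ : RLTL P) :
    (cl (ltl φ 0) ∪ cl (ltl φ 1) ∪ cl (ltl φ 2) ∪ cl (ltl φ 3)).card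
      ≤ 12 * (rcl φ).card := by
  have hsub : cl (ltl φ 0) ∪ cl (ltl φ 1) ∪ cl (ltl φ 2) ∪ cl (ltl φ 3)
      ⊆ (rcl φ).biUnion gen :=
    Finset.union_subset (Finset.union_subset (Finset.union_subset
      (cl_ltl_subset φ 0 (by norm_num)) (cl_ltl_subset φ 1 (by norm_num)))
      (cl_ltl_subset φ 2 (by norm_num))) (cl_ltl_subset φ 3 (by norm_num))
  calc (cl (ltl φ 0) ∪ cl (ltl φ 1) ∪ cl (ltl φ 2) ∪ cl (ltl φ 3)).card
      ≤ ((rcl φ).biUnion gen).card := Finset.card_le_card hsub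
    _ ≤ ∑ ψ ∈ rcl φ, (gen ψ).card := Finset.card_biUnion_le
    _ ≤ ∑ _ψ ∈ rcl φ, 12 := Finset.sum_le_sum (fun ψ _ => gen_card ψ)
    _ = 12 * (rcl φ).card := by rw [Finset.sum_const, smul_eq_mul, mul_comm]

end RLTLPaper
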